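/- Let H_U, H_Y be real Hilbert spaces, V_U ⊆ H_U, V_Y ⊆ H_Y closed subspaces with inclusions ι_U, ι_Y and orthogonal projection π : H_U →L[ℝ] V_U. Let K : H_U →L[ℝ] H_Y, K' : V_U →L[ℝ] V_Y with ‖K‖ ≤ C, ‖K'‖ ≤ C and ‖K − ι_Y ∘ K' ∘ π‖ ≤ a; let β > 0 with 4 C a ≤ β and set b := 4 β⁻¹ C a, and assume b ≤ 0.1. Let G = K† ∘ K + β • 1 with continuous inverse G⁻¹, and G' = (K')† ∘ K' + β • 1 with continuous inverse (G')⁻¹. Let W' : V_U →L[ℝ] V_U be positive definite with |Real.log ⟪W' v, v⟫ − Real.log ⟪(G')⁻¹ v, v⟫| ≤ d for all v ≠ 0, where 0 ≤ d < 0.2. Define E(W') = ι_U ∘ W' ∘ π + β⁻¹ • (1 − ι_U ∘ π) and the Newton iterate W := 2 • E(W') − E(W') ∘ G ∘ E(W'). Then W is positive definite and for every u ∈ H_U with u ≠ 0, |Real.log ⟪W u, u⟫ − Real.log ⟪G⁻¹ u, u⟫| ≤ 2 (d + b)². Moreover 2(d + b)² < 0.2. -/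

import Mathlib

/-!
The coarse operator `G̃ = ι G' π + β (1 - ι π)` is itself of the form `L† L + β` with
`L = ι_Y K' π`, so `‖K - L‖ ≤ a` puts `G` and `G̃` within spectral distance `b`. Inversion
preserves spectral distance, `G̃⁻¹ = E(G'⁻¹)`, and `E(G'⁻¹)` is within `d` of `E(W')`, so
`E(W')` is within `ε = d + b` of `G⁻¹`. With `D = G⁻¹ - E(W')` the Newton step satisfies
`G⁻¹ - W = D G D`, and `|D| ≤ (e^ε - 1) G⁻¹` gives `0 ≤ D G D ≤ (e^ε - 1)² G⁻¹`; for
`ε ≤ 0.3` this yields `e^{-2ε²} G⁻¹ ≤ W ≤ G⁻¹`.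
-/

open scoped RealInnerProductSpace
open ContinuousLinearMap

lemma abs_log_sub_log_le_iff {p q c : ℝ} (hp : 0 < p) (hq : 0 < q) :
    |Real.log p - Real.log q| ≤ c ↔ p ≤ Real.exp c * q ∧ q ≤ Real.exp c * p := by
  rw [abs_sub_le_iff, ← Real.log_le_log_iff hp (by positivity),
    ← Real.log_le_log_iff hq (by positivity), Real.log_mul (Real.exp_ne_zero c) hq.ne',
    Real.log_mul (Real.exp_ne_zero c) hp.ne', Real.log_exp]
  constructor <;> rintro ⟨h₁, h₂⟩ <;> constructor <;> linarith

lemma abs_log_sub_log_le_of_exp_neg_mul_le {p q c : ℝ} (hq : 0 < q) (hc : 0 ≤ c)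
    (hqp : Real.exp (-c) * q ≤ p) (hpq : p ≤ q) : |Real.log p - Real.log q| ≤ c := by
  have hp : 0 < p := (mul_pos (Real.exp_pos _) hq).trans_le hqp
  refine (abs_log_sub_log_le_iff hp hq).2 ⟨hpq.trans (le_mul_of_one_le_left hq.le ?_), ?_⟩
  · exact Real.one_le_exp hc
  · calc q = Real.exp c * (Real.exp (-c) * q) := by rw [← mul_assoc, ← Real.exp_add]; simp
      _ ≤ Real.exp c * p := by gcongr

lemma exp_neg_two_mul_sq_le_one_sub_sq {ε : ℝ} (hε₀ : 0 ≤ ε) (hε : ε ≤ 3 / 10) :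
    Real.exp (-(2 * ε ^ 2)) ≤ 1 - (Real.exp ε - 1) ^ 2 := by
  have hx₀ : 0 ≤ Real.exp ε - 1 := by linarith [Real.add_one_le_exp ε]
  have hx : Real.exp ε - 1 ≤ ε + ε ^ 2 := by
    have := Real.abs_exp_sub_one_sub_id_le (x := ε) (by rw [abs_of_nonneg hε₀]; linarith)
    linarith [(abs_le.1 this).2]
  -- `exp (-2ε²) ≤ 1 / (1 + 2ε²)`, and `(e^ε - 1)² ≤ 1.69 ε²` beats `1 - 1 / (1 + 2ε²)`.
  have hexp : Real.exp (-(2 * ε ^ 2)) * (1 + 2 * ε ^ 2) ≤ 1 := by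
    calc Real.exp (-(2 * ε ^ 2)) * (1 + 2 * ε ^ 2)
        ≤ Real.exp (-(2 * ε ^ 2)) * Real.exp (2 * ε ^ 2) := by
          gcongr; linarith [Real.add_one_le_exp (2 * ε ^ 2)]
      _ = 1 := by rw [← Real.exp_add]; simp
  have hsq : 1 ≤ (1 - (Real.exp ε - 1) ^ 2) * (1 + 2 * ε ^ 2) := by
    have hx₂ : (Real.exp ε - 1) ^ 2 ≤ (13 / 10 * ε) ^ 2 := by gcongr; nlinarith
    have hε₂ : ε ^ 2 ≤ 9 / 100 := by nlinarith
    nlinarith [mul_le_mul_of_nonneg_right hx₂ (by positivity : (0 : ℝ) ≤ 1 + 2 * ε ^ 2),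
      mul_le_mul_of_nonneg_left hε₂ (sq_nonneg ε)]
  nlinarith [Real.exp_pos (-(2 * ε ^ 2))]

lemma IsSelfAdjoint.of_mul_eq_one {R : Type*} [Monoid R] [StarMul R] {a b : R}
    (ha : IsSelfAdjoint a) (h : a * b = 1) : IsSelfAdjoint b :=
  left_inv_eq_right_inv (by simpa [ha.star_eq] using congrArg star h) h

lemma IsSelfAdjoint.mul_eq_one_comm {R : Type*} [Monoid R] [StarMul R] {a b : R}
    (ha : IsSelfAdjoint a) (h : a * b = 1) : b * a = 1 := by
  simpa [ha.star_eq, (ha.of_mul_eq_one h).star_eq] using congrArg star h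

section SpectralDist

variable {H : Type*} [NormedAddCommGroup H] [InnerProductSpace ℝ H]

lemma inner_apply_self_eq_of_comp_eq_one {G Ginv : H →L[ℝ] H} (h : G ∘L Ginv = 1) (u : H) :
    ⟪Ginv u, u⟫ = ⟪G (Ginv u), Ginv u⟫ := by
  have hu : G (Ginv u) = u := DFunLike.congr_fun h u
  nth_rewrite 2 [← hu]
  exact real_inner_comm _ _

lemma inner_apply_self_pos_of_comp_eq_one {G Ginv : H →L[ℝ] H} (hG : ∀ w ≠ 0, 0 < ⟪G w, w⟫)
    (h : G ∘L Ginv = 1) {u : H} (hu : u ≠ 0) : 0 < ⟪Ginv u, u⟫ := by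
  rw [inner_apply_self_eq_of_comp_eq_one h]
  have hGu : G (Ginv u) = u := DFunLike.congr_fun h u
  exact hG _ fun h₀ => hu (by rw [← hGu, h₀, map_zero])

lemma inner_inv_apply_self_le_mul_of_le_mul {X Xinv Y Yinv : H →L[ℝ] H} (hY : Y.IsPositive)
    (hX : X ∘L Xinv = 1) (hY' : Y ∘L Yinv = 1) {t : ℝ} (ht : 0 < t)
    (h : ∀ w, ⟪Y w, w⟫ ≤ t * ⟪X w, w⟫) (u : H) : ⟪Xinv u, u⟫ ≤ t * ⟪Yinv u, u⟫ := by
  set w := Xinv u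
  set z := Yinv u
  have hXw : X w = u := DFunLike.congr_fun hX u
  have hYz : Y z = u := DFunLike.congr_fun hY' u
  have hYwz : ⟪Y w, z⟫ = ⟪w, u⟫ := by rw [← hYz]; exact hY.isSymmetric w z
  have key := hY.inner_nonneg_left (t • z - w)
  simp only [map_sub, map_smul, inner_sub_left, inner_sub_right, real_inner_smul_left,
    real_inner_smul_right, hYz, hYwz] at key
  have hw := h w
  rw [hXw] at hw
  rw [real_inner_comm u w] at key
  rw [real_inner_comm u w, real_inner_comm u z]
  nlinarith

/-- `d_σ(X, Y) ≤ c` in multiplicative form, which unlike the log form makes sense at `u = 0`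
and for merely nonnegative forms. -/
def SpectralDistLE (c : ℝ) (X Y : H →L[ℝ] H) : Prop :=
  ∀ u, ⟪X u, u⟫ ≤ Real.exp c * ⟪Y u, u⟫ ∧ ⟪Y u, u⟫ ≤ Real.exp c * ⟪X u, u⟫

namespace SpectralDistLE

variable {c c' : ℝ} {X Xinv Y Yinv Z : H →L[ℝ] H}

lemma symm (h : SpectralDistLE c X Y) : SpectralDistLE c Y X := fun u => (h u).symm

lemma trans (h : SpectralDistLE c X Y) (h' : SpectralDistLE c' Y Z) :
    SpectralDistLE (c + c') X Z := by
  intro u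
  obtain ⟨hXY, hYX⟩ := h u
  obtain ⟨hYZ, hZY⟩ := h' u
  rw [Real.exp_add]
  constructor
  · calc ⟪X u, u⟫ ≤ Real.exp c * ⟪Y u, u⟫ := hXY
      _ ≤ Real.exp c * (Real.exp c' * ⟪Z u, u⟫) := by gcongr
      _ = _ := by ring
  · calc ⟪Z u, u⟫ ≤ Real.exp c' * ⟪Y u, u⟫ := hZY
      _ ≤ Real.exp c' * (Real.exp c * ⟪X u, u⟫) := by gcongr
      _ = _ := by ring

lemma of_abs_log_le (hX : ∀ u ≠ 0, 0 < ⟪X u, u⟫) (hY : ∀ u ≠ 0, 0 < ⟪Y u, u⟫)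
    (h : ∀ u ≠ 0, |Real.log ⟪X u, u⟫ - Real.log ⟪Y u, u⟫| ≤ c) : SpectralDistLE c X Y := by
  intro u
  rcases eq_or_ne u 0 with rfl | hu
  · simp
  · exact (abs_log_sub_log_le_iff (hX u hu) (hY u hu)).1 (h u hu)

lemma inv (hX : X.IsPositive) (hY : Y.IsPositive) (hX' : X ∘L Xinv = 1) (hY' : Y ∘L Yinv = 1)
    (h : SpectralDistLE c X Y) : SpectralDistLE c Xinv Yinv := fun u =>
  ⟨inner_inv_apply_self_le_mul_of_le_mul hY hX' hY' (Real.exp_pos c) (fun w => (h w).2) u,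
    inner_inv_apply_self_le_mul_of_le_mul hX hY' hX' (Real.exp_pos c) (fun w => (h w).1) u⟩

end SpectralDistLE

end SpectralDist

section Gram

variable {H F : Type*} [NormedAddCommGroup H] [InnerProductSpace ℝ H] [CompleteSpace H]
  [NormedAddCommGroup F] [InnerProductSpace ℝ F] [CompleteSpace F]

lemma inner_adjoint_comp_self_add_smul_one_apply_self (K : H →L[ℝ] F) (β : ℝ) (u : H) :
    ⟪(adjoint K ∘L K + β • 1) u, u⟫ = ‖K u‖ ^ 2 + β * ‖u‖ ^ 2 := by
  simp [inner_add_left, adjoint_inner_left, real_inner_smul_left]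

lemma isPositive_adjoint_comp_self_add_smul_one (K : H →L[ℝ] F) {β : ℝ} (hβ : 0 ≤ β) :
    (adjoint K ∘L K + β • 1).IsPositive :=
  (isPositive_adjoint_comp_self K).add (isPositive_one.smul_of_nonneg hβ)

lemma inner_adjoint_comp_self_add_smul_one_apply_self_pos (K : H →L[ℝ] F) {β : ℝ} (hβ : 0 < β) :
    ∀ u ≠ 0, 0 < ⟪(adjoint K ∘L K + β • 1) u, u⟫ := by
  intro u hu
  rw [inner_adjoint_comp_self_add_smul_one_apply_self]
  have := norm_pos_iff.2 hu
  positivity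

lemma spectralDistLE_adjoint_comp_self_add_smul_one {K L : H →L[ℝ] F} {C a β c : ℝ}
    (hK : ‖K‖ ≤ C) (hL : ‖L‖ ≤ C) (hKL : ‖K - L‖ ≤ a) (hβ : 0 < β) (hc : 2 * C * a ≤ β * c) :
    SpectralDistLE c (adjoint K ∘L K + β • 1) (adjoint L ∘L L + β • 1) := by
  have hc₀ : 0 ≤ c := by
    have := (norm_nonneg K).trans hK
    have := (norm_nonneg _).trans hKL
    nlinarith
  have key : ∀ {x y n : ℝ}, 0 ≤ x → 0 ≤ y → 0 ≤ n → x ≤ C * n → y ≤ C * n → |x - y| ≤ a * n →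
      x ^ 2 + β * n ^ 2 ≤ Real.exp c * (y ^ 2 + β * n ^ 2) := by
    intro x y n hx hy hn hxC hyC hxy
    have han : 0 ≤ a * n := (abs_nonneg _).trans hxy
    have hsq : x ^ 2 - y ^ 2 ≤ β * c * n ^ 2 :=
      calc x ^ 2 - y ^ 2 = (x - y) * (x + y) := by ring
        _ ≤ a * n * (x + y) := by gcongr; exact (le_abs_self _).trans hxy
        _ ≤ a * n * (2 * C * n) := by gcongr; linarith
        _ = 2 * C * a * n ^ 2 := by ring
        _ ≤ β * c * n ^ 2 := by gcongr
    calc x ^ 2 + β * n ^ 2 ≤ (1 + c) * (y ^ 2 + β * n ^ 2) := by nlinarith [sq_nonneg y]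
      _ ≤ Real.exp c * (y ^ 2 + β * n ^ 2) := by
        gcongr; linarith [Real.add_one_le_exp c]
  intro u
  simp only [inner_adjoint_comp_self_add_smul_one_apply_self]
  have hKu := K.le_of_opNorm_le hK u
  have hLu := L.le_of_opNorm_le hL u
  have hdiff : |‖K u‖ - ‖L u‖| ≤ a * ‖u‖ :=
    (abs_norm_sub_norm_le _ _).trans ((K - L).le_of_opNorm_le hKL u)
  exact ⟨key (norm_nonneg _) (norm_nonneg _) (norm_nonneg _) hKu hLu hdiff,
    key (norm_nonneg _) (norm_nonneg _) (norm_nonneg _) hLu hKu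
    (by rwa [abs_sub_comm])⟩

end Gram

namespace Submodule

variable {H : Type*} [NormedAddCommGroup H] [InnerProductSpace ℝ H]
  (V : Submodule ℝ H) [CompleteSpace V]

/-- `A ⊕ c • id` on `V ⊕ Vᗮ`; the paper's `E(W')` is `V.blockDiag W' β⁻¹`. -/
noncomputable def blockDiag (A : V →L[ℝ] V) (c : ℝ) : H →L[ℝ] H :=
  V.subtypeL ∘L A ∘L V.orthogonalProjectionOnto +
    c • (1 - V.subtypeL ∘L V.orthogonalProjectionOnto)

variable {V}

lemma blockDiag_apply (A : V →L[ℝ] V) (c : ℝ) (u : H) :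
    V.blockDiag A c u = A (V.orthogonalProjectionOnto u) + c • Vᗮ.starProjection u := by
  simp [blockDiag]

lemma blockDiag_comp_blockDiag (A B : V →L[ℝ] V) (c c' : ℝ) :
    V.blockDiag A c ∘L V.blockDiag B c' = V.blockDiag (A ∘L B) (c * c') := by
  ext u
  have h₁ : V.orthogonalProjectionOnto (Vᗮ.starProjection u) = 0 :=
    orthogonalProjectionOnto_apply_of_mem_orthogonal (Vᗮ.starProjection_apply_mem u)
  have h₂ : Vᗮ.starProjection (Vᗮ.starProjection u) = Vᗮ.starProjection u :=
    starProjection_eq_self_iff.2 (Vᗮ.starProjection_apply_mem u)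
  have h₃ (v : V) : Vᗮ.starProjection v = 0 := starProjection_orthogonal_apply_eq_zero v.2
  simp only [comp_apply, blockDiag_apply, map_add, map_smul, h₁, h₂, h₃, map_zero,
    orthogonalProjectionOnto_mem_subspace_eq_self, smul_zero, add_zero, zero_add, mul_smul,
    ZeroMemClass.coe_zero]
  rw [smul_comm]

lemma blockDiag_comp_blockDiag_eq_one {A B : V →L[ℝ] V} (h : A ∘L B = 1) {c : ℝ} (hc : c ≠ 0) :
    V.blockDiag A c ∘L V.blockDiag B c⁻¹ = 1 := by
  ext u
  simp [blockDiag_comp_blockDiag, h, mul_inv_cancel₀ hc, blockDiag_apply]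

lemma inner_blockDiag_apply_self (A : V →L[ℝ] V) (c : ℝ) (u : H) :
    ⟪V.blockDiag A c u, u⟫ = ⟪A (V.orthogonalProjectionOnto u), V.orthogonalProjectionOnto u⟫
      + c * ‖Vᗮ.orthogonalProjectionOnto u‖ ^ 2 := by
  rw [blockDiag_apply, inner_add_left, real_inner_smul_left,
    ← inner_orthogonalProjectionOnto_eq_of_mem_left, ← Vᗮ.re_inner_starProjection_eq_normSq u,
    RCLike.re_to_real]

lemma _root_.SpectralDistLE.blockDiag {A B : V →L[ℝ] V} {d : ℝ} (h : SpectralDistLE d A B)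
    (hd : 0 ≤ d) {c : ℝ} (hc : 0 ≤ c) : SpectralDistLE d (V.blockDiag A c) (V.blockDiag B c) := by
  intro u
  obtain ⟨hAB, hBA⟩ := h (V.orthogonalProjectionOnto u)
  have hc' : c * ‖Vᗮ.orthogonalProjectionOnto u‖ ^ 2 ≤
      Real.exp d * (c * ‖Vᗮ.orthogonalProjectionOnto u‖ ^ 2) :=
    le_mul_of_one_le_left (by positivity) (Real.one_le_exp hd)
  simp only [inner_blockDiag_apply_self, mul_add]
  constructor <;> linarith

lemma norm_subtypeL_comp_comp_orthogonalProjectionOnto_le {F : Type*} [NormedAddCommGroup F]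
    [InnerProductSpace ℝ F] (W : Submodule ℝ F) (K : V →L[ℝ] W) :
    ‖W.subtypeL ∘L K ∘L V.orthogonalProjectionOnto‖ ≤ ‖K‖ :=
  calc _ ≤ ‖W.subtypeL‖ * (‖K‖ * ‖V.orthogonalProjectionOnto‖) :=
        (opNorm_comp_le _ _).trans (by gcongr; exact opNorm_comp_le _ _)
    _ ≤ 1 * (‖K‖ * 1) := by
        gcongr
        exacts [norm_subtypeL_le _, orthogonalProjectionOnto_norm_le _]
    _ = ‖K‖ := by ring

variable [CompleteSpace H]

lemma _root_.IsSelfAdjoint.blockDiag {A : V →L[ℝ] V} (hA : IsSelfAdjoint A) (c : ℝ) :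
    IsSelfAdjoint (V.blockDiag A c) := by
  have h := hA.conj_adjoint V.subtypeL
  rw [V.adjoint_subtypeL] at h
  unfold Submodule.blockDiag
  exact h.add
    ((IsSelfAdjoint.all c).smul ((IsSelfAdjoint.one _).sub (isSelfAdjoint_starProjection V)))

lemma _root_.ContinuousLinearMap.IsPositive.blockDiag {A : V →L[ℝ] V} (hA : A.IsPositive) {c : ℝ}
    (hc : 0 ≤ c) : (V.blockDiag A c).IsPositive := by
  refine isPositive_def'.2 ⟨hA.isSelfAdjoint.blockDiag c, fun u => ?_⟩
  rw [reApplyInnerSelf_apply, RCLike.re_to_real, inner_blockDiag_apply_self]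
  have := hA.inner_nonneg_left (V.orthogonalProjectionOnto u)
  positivity

variable {F : Type*} [NormedAddCommGroup F] [InnerProductSpace ℝ F] [CompleteSpace F]
  (W : Submodule ℝ F) [CompleteSpace W]

lemma blockDiag_adjoint_comp_self_add_smul_one (K : V →L[ℝ] W) (β : ℝ) :
    V.blockDiag (adjoint K ∘L K + β • 1) β =
      adjoint (W.subtypeL ∘L K ∘L V.orthogonalProjectionOnto) ∘L
        (W.subtypeL ∘L K ∘L V.orthogonalProjectionOnto) + β • 1 := by
  ext u
  simp only [blockDiag_apply, adjoint_comp, W.adjoint_subtypeL,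
    V.adjoint_orthogonalProjectionOnto, add_apply, comp_apply, smul_apply,
    one_apply_eq_self, subtypeL_apply, orthogonalProjectionOnto_mem_subspace_eq_self,
    coe_add, coe_smul]
  rw [add_assoc, ← smul_add, ← starProjection_apply, starProjection_add_starProjection_orthogonal]

lemma spectralDistLE_blockDiag_adjoint_comp_self_add_smul_one {K : H →L[ℝ] F} {K' : V →L[ℝ] W}
    {C a β c : ℝ} (hK : ‖K‖ ≤ C) (hK' : ‖K'‖ ≤ C)
    (hKK' : ‖K - W.subtypeL ∘L K' ∘L V.orthogonalProjectionOnto‖ ≤ a) (hβ : 0 < β)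
    (hc : 2 * C * a ≤ β * c) :
    SpectralDistLE c (adjoint K ∘L K + β • 1) (V.blockDiag (adjoint K' ∘L K' + β • 1) β) := by
  rw [blockDiag_adjoint_comp_self_add_smul_one]
  exact spectralDistLE_adjoint_comp_self_add_smul_one hK
    ((norm_subtypeL_comp_comp_orthogonalProjectionOnto_le W K').trans hK') hKK' hβ hc

end Submodule

section Newton

variable {H : Type*} [NormedAddCommGroup H] [InnerProductSpace ℝ H]

noncomputable def newtonStep (G E : H →L[ℝ] H) : H →L[ℝ] H := (2 : ℝ) • E - E ∘L G ∘L E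

lemma newtonStep_eq {G Ginv : H →L[ℝ] H} (E : H →L[ℝ] H) (h₁ : G ∘L Ginv = 1)
    (h₂ : Ginv ∘L G = 1) :
    newtonStep G E = Ginv - (Ginv - E) ∘L G ∘L (Ginv - E) := by
  have h₁' : G * Ginv = 1 := h₁
  have h₂' : Ginv * G = 1 := h₂
  have : (Ginv - E) * (G * (Ginv - E)) = Ginv - E - E + E * (G * E) := by
    simp only [sub_mul, mul_sub, ← mul_assoc, h₁', h₂', one_mul, mul_one]
    abel
  change (2 : ℝ) • E - E * (G * E) = Ginv - (Ginv - E) * (G * (Ginv - E))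
  rw [this, two_smul]
  abel

variable [CompleteSpace H]

lemma IsSelfAdjoint.newtonStep {G E : H →L[ℝ] H} (hG : IsSelfAdjoint G) (hE : IsSelfAdjoint E) :
    IsSelfAdjoint (newtonStep G E) := by
  refine ((IsSelfAdjoint.all _).smul hE).sub ?_
  have := hG.conj_adjoint E
  rwa [hE.adjoint_eq] at this

/-- `|D| ≤ s G⁻¹` implies `D G D ≤ s² G⁻¹`, written with `u = G x` so that no inverse
appears. -/
lemma inner_sandwich_le {G D : H →L[ℝ] H} (hG : G.IsPositive) (hD : IsSelfAdjoint D) {s : ℝ}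
    (hs : 0 ≤ s) (h : ∀ x, |⟪D (G x), G x⟫| ≤ s * ⟪G x, x⟫) (v : H) :
    ⟪G (D (G v)), D (G v)⟫ ≤ s ^ 2 * ⟪G v, v⟫ := by
  have hGs : ∀ x y, ⟪G x, y⟫ = ⟪x, G y⟫ := hG.isSelfAdjoint.isSymmetric
  have hDs : ∀ x y, ⟪D x, y⟫ = ⟪x, D y⟫ := hD.isSymmetric
  -- polarization of the symmetric form `⟪D (G x), G y⟫`
  have pol : ∀ x y, 4 * ⟪D (G x), G y⟫ ≤ 2 * s * (⟪G x, x⟫ + ⟪G y, y⟫) := by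
    intro x y
    have hp := (abs_le.1 (h (x + y))).2
    have hm := (abs_le.1 (h (x - y))).1
    simp only [map_add, map_sub, inner_add_left, inner_add_right, inner_sub_left,
      inner_sub_right] at hp hm
    have e₁ : ⟪D (G y), G x⟫ = ⟪D (G x), G y⟫ := by rw [hDs, real_inner_comm]
    have e₂ : ⟪G y, x⟫ = ⟪G x, y⟫ := by rw [hGs, real_inner_comm]
    rw [e₁, e₂] at hp hm
    linarith
  set w := D (G v)
  have hw : ⟪D (G v), G w⟫ = ⟪G w, w⟫ := real_inner_comm _ _
  rcases hs.eq_or_lt with rfl | hs₀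
  · have := pol v w
    rw [hw] at this
    nlinarith [hG.inner_nonneg_left v]
  · have := pol (s • v) w
    simp only [map_smul, real_inner_smul_left, real_inner_smul_right, hw] at this
    nlinarith [hG.inner_nonneg_left v, hG.inner_nonneg_left w]

lemma inner_newtonStep_apply_self_bounds {G Ginv E : H →L[ℝ] H} (hG : G.IsPositive)
    (hGinv : G ∘L Ginv = 1) (hE : IsSelfAdjoint E) {ε : ℝ} (hε₀ : 0 ≤ ε) (hε : ε ≤ 3 / 10)
    (hEG : SpectralDistLE ε E Ginv) (u : H) :
    Real.exp (-(2 * ε ^ 2)) * ⟪Ginv u, u⟫ ≤ ⟪newtonStep G E u, u⟫ ∧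
      ⟪newtonStep G E u, u⟫ ≤ ⟪Ginv u, u⟫ := by
  have hGinv' : Ginv ∘L G = 1 := hG.isSelfAdjoint.mul_eq_one_comm hGinv
  have hD : IsSelfAdjoint (Ginv - E) := (hG.isSelfAdjoint.of_mul_eq_one hGinv).sub hE
  have hGinv₀ (x : H) : 0 ≤ ⟪Ginv x, x⟫ := by
    rw [inner_apply_self_eq_of_comp_eq_one hGinv]
    exact hG.inner_nonneg_left _
  have hDle (x : H) : |⟪(Ginv - E) x, x⟫| ≤ (Real.exp ε - 1) * ⟪Ginv x, x⟫ := by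
    obtain ⟨h₁, h₂⟩ := hEG x
    rw [sub_apply, inner_sub_left, abs_le]
    constructor
    · linarith
    · nlinarith [mul_nonneg (sq_nonneg (Real.exp ε - 1)) (hGinv₀ x), Real.exp_pos ε]
  have hGinvG (x : H) : Ginv (G x) = x := DFunLike.congr_fun hGinv' x
  have hGGinv : G (Ginv u) = u := DFunLike.congr_fun hGinv u
  have hDGD := inner_sandwich_le hG hD (s := Real.exp ε - 1) (by linarith [Real.add_one_le_exp ε])
    (fun x => by simpa [hGinvG, real_inner_comm x] using hDle (G x)) (Ginv u)
  rw [hGGinv, real_inner_comm (Ginv u)] at hDGD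
  have hW : ⟪newtonStep G E u, u⟫ = ⟪Ginv u, u⟫ - ⟪G ((Ginv - E) u), (Ginv - E) u⟫ := by
    rw [newtonStep_eq E hGinv hGinv', sub_apply, inner_sub_left, comp_apply, comp_apply]
    congr 1
    exact hD.isSymmetric _ _
  have hscalar := exp_neg_two_mul_sq_le_one_sub_sq hε₀ hε
  rw [hW]
  constructor
  · nlinarith [mul_le_mul_of_nonneg_right hscalar (hGinv₀ u)]
  · linarith [hG.inner_nonneg_left ((Ginv - E) u)]

end Newton

theorem multilevel_recursion_step_general
    {HU HY : Type*} [NormedAddCommGroup HU] [InnerProductSpace ℝ HU] [CompleteSpace HU]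
    [NormedAddCommGroup HY] [InnerProductSpace ℝ HY] [CompleteSpace HY]
    (VU : Submodule ℝ HU) [CompleteSpace VU]
    (VY : Submodule ℝ HY) [CompleteSpace VY]
    (K : HU →L[ℝ] HY) (K' : VU →L[ℝ] VY) (C a : ℝ)
    (hKC : ‖K‖ ≤ C) (hK'C : ‖K'‖ ≤ C)
    (ha : ‖K - VY.subtypeL.comp (K'.comp VU.orthogonalProjectionOnto)‖ ≤ a)
    (β : ℝ) (hβ : 0 < β)
    (b : ℝ) (hb : b = 4 * β⁻¹ * C * a) (hb1 : b ≤ 0.1)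
    (G Ginv : HU →L[ℝ] HU)
    (hG : G = (ContinuousLinearMap.adjoint K).comp K + β • 1)
    (hG1 : G.comp Ginv = 1)
    (G' G'inv : VU →L[ℝ] VU)
    (hG' : G' = (ContinuousLinearMap.adjoint K').comp K' + β • 1)
    (hG'1 : G'.comp G'inv = 1)
    (W' : VU →L[ℝ] VU)
    (hW'sa : IsSelfAdjoint W') (hW'pos : ∀ v : VU, v ≠ 0 → 0 < ⟪W' v, v⟫)
    (d : ℝ) (hd0 : 0 ≤ d) (hd2 : d < 0.2)
    (hW'd : ∀ v : VU, v ≠ 0 → |Real.log ⟪W' v, v⟫ - Real.log ⟪G'inv v, v⟫| ≤ d)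
    (EW' : HU →L[ℝ] HU)
    (hEW' : EW' = VU.subtypeL.comp (W'.comp VU.orthogonalProjectionOnto) +
      β⁻¹ • (1 - VU.subtypeL.comp VU.orthogonalProjectionOnto))
    (W : HU →L[ℝ] HU) (hW : W = (2 : ℝ) • EW' - EW'.comp (G.comp EW')) :
    (IsSelfAdjoint W ∧ ∀ u : HU, u ≠ 0 → 0 < ⟪W u, u⟫) ∧
      (∀ u : HU, u ≠ 0 →
        |Real.log ⟪W u, u⟫ - Real.log ⟪Ginv u, u⟫| ≤ 2 * (d + b) ^ 2) ∧
      2 * (d + b) ^ 2 < 0.2 := by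
  have hCa : 0 ≤ C * a := mul_nonneg ((norm_nonneg _).trans hKC) ((norm_nonneg _).trans ha)
  have hb₀ : 0 ≤ b := by rw [hb, mul_assoc _ C]; exact mul_nonneg (by positivity) hCa
  have hε : d + b ≤ 3 / 10 := by norm_num at hd2 hb1; linarith
  have hGpos : G.IsPositive := hG ▸ isPositive_adjoint_comp_self_add_smul_one K hβ.le
  have hG'pos : G'.IsPositive := hG' ▸ isPositive_adjoint_comp_self_add_smul_one K' hβ.le
  have hGGt : SpectralDistLE b G (VU.blockDiag G' β) := by
    rw [hG, hG']
    refine VU.spectralDistLE_blockDiag_adjoint_comp_self_add_smul_one VY hKC hK'C ha hβ ?_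
    rw [hb]; field_simp; linarith
  have hGinvF : SpectralDistLE b Ginv (VU.blockDiag G'inv β⁻¹) :=
    hGGt.inv hGpos (hG'pos.blockDiag hβ.le) hG1 (VU.blockDiag_comp_blockDiag_eq_one hG'1 hβ.ne')
  have hW'G'inv : SpectralDistLE d W' G'inv := .of_abs_log_le hW'pos
    (fun _ => inner_apply_self_pos_of_comp_eq_one
      (hG' ▸ inner_adjoint_comp_self_add_smul_one_apply_self_pos K' hβ) hG'1) hW'd
  have hEG : SpectralDistLE (d + b) EW' Ginv :=
    hEW' ▸ (hW'G'inv.blockDiag hd0 (inv_nonneg.2 hβ.le)).trans hGinvF.symm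
  have hE : IsSelfAdjoint EW' := hEW' ▸ hW'sa.blockDiag _
  have hGinvpos {u : HU} : u ≠ 0 → 0 < ⟪Ginv u, u⟫ := inner_apply_self_pos_of_comp_eq_one
    (hG ▸ inner_adjoint_comp_self_add_smul_one_apply_self_pos K hβ) hG1
  have hbounds := inner_newtonStep_apply_self_bounds hGpos hG1 hE (add_nonneg hd0 hb₀) hε hEG
  obtain rfl : W = newtonStep G EW' := hW
  refine ⟨⟨hGpos.isSelfAdjoint.newtonStep hE, fun u hu => ?_⟩, fun u hu => ?_, ?_⟩
  · exact (mul_pos (Real.exp_pos _) (hGinvpos hu)).trans_le (hbounds u).1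
  · exact abs_log_sub_log_le_of_exp_neg_mul_le (hGinvpos hu) (by positivity) (hbounds u).1
      (hbounds u).2
  · norm_num at hd2 hb1 ⊢
    nlinarith

/-- Intermediate-level recursion step of the multilevel convergence proof:
`d_j ≤ 2 (d_{j+1} + b_j)²` for the Newton-corrected two-level operator
`W = 2 E(W') - E(W') G E(W')`, together with positive definiteness of `W`
and the bound `2 (d + b)² < 0.2`. -/
theorem multilevel_recursion_step
    {HU HY : Type*} [NormedAddCommGroup HU] [InnerProductSpace ℝ HU] [CompleteSpace HU]
    [NormedAddCommGroup HY] [InnerProductSpace ℝ HY] [CompleteSpace HY]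
    (VU : Submodule ℝ HU) [CompleteSpace VU]
    (VY : Submodule ℝ HY) [CompleteSpace VY]
    (K : HU →L[ℝ] HY) (K' : VU →L[ℝ] VY) (C a : ℝ)
    (hKC : ‖K‖ ≤ C) (hK'C : ‖K'‖ ≤ C) (ha0 : 0 ≤ a)
    (ha : ‖K - VY.subtypeL.comp (K'.comp VU.orthogonalProjectionOnto)‖ ≤ a)
    (β : ℝ) (hβ : 0 < β) (hβa : 4 * C * a ≤ β)
    (b : ℝ) (hb : b = 4 * β⁻¹ * C * a) (hb1 : b ≤ 0.1)
    (G Ginv : HU →L[ℝ] HU)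
    (hG : G = (ContinuousLinearMap.adjoint K).comp K + β • 1)
    (hG1 : G.comp Ginv = 1) (hG2 : Ginv.comp G = 1)
    (G' G'inv : VU →L[ℝ] VU)
    (hG' : G' = (ContinuousLinearMap.adjoint K').comp K' + β • 1)
    (hG'1 : G'.comp G'inv = 1) (hG'2 : G'inv.comp G' = 1)
    (W' : VU →L[ℝ] VU)
    (hW'sa : IsSelfAdjoint W') (hW'pos : ∀ v : VU, v ≠ 0 → 0 < ⟪W' v, v⟫)
    (d : ℝ) (hd0 : 0 ≤ d) (hd2 : d < 0.2)
    (hW'd : ∀ v : VU, v ≠ 0 → |Real.log ⟪W' v, v⟫ - Real.log ⟪G'inv v, v⟫| ≤ d)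
    (EW' : HU →L[ℝ] HU)
    (hEW' : EW' = VU.subtypeL.comp (W'.comp VU.orthogonalProjectionOnto) +
      β⁻¹ • (1 - VU.subtypeL.comp VU.orthogonalProjectionOnto))
    (W : HU →L[ℝ] HU) (hW : W = (2 : ℝ) • EW' - EW'.comp (G.comp EW')) :
    (IsSelfAdjoint W ∧ ∀ u : HU, u ≠ 0 → 0 < ⟪W u, u⟫) ∧
      (∀ u : HU, u ≠ 0 →
        |Real.log ⟪W u, u⟫ - Real.log ⟪Ginv u, u⟫| ≤ 2 * (d + b) ^ 2) ∧
      2 * (d + b) ^ 2 < 0.2 :=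
  multilevel_recursion_step_general VU VY K K' C a hKC hK'C ha β hβ b hb hb1 G Ginv hG hG1 G' G'inv
    hG' hG'1 W' hW'sa hW'pos d hd0 hd2 hW'd EW' hEW' W hW
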